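/- Let A₁, …, A_M be independent events in a probability space, each with probability p. Then Pr(⋃ᵢ Aᵢ) ≥ (1/2)·min{1, M·p}. -/

import Mathlib

open MeasureTheory ProbabilityTheory
open scoped ENNReal

/-! Independence of the complements gives `Pr(⋃ᵢ Aᵢ) = 1 - (1 - p)ᴹ`. Bernoulli's inequality
`(1 + p)ᴹ ≥ 1 + Mp` together with `(1 - p)ᴹ (1 + p)ᴹ = (1 - p²)ᴹ ≤ 1` yields
`(1 - p)ᴹ ≤ 1 / (1 + Mp)`, so `Pr(⋃ᵢ Aᵢ) ≥ Mp / (1 + Mp)`, which is at least `min 1 (Mp) / 2`. -/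

lemma one_sub_pow_mul_one_add_mul_le_one {x : ℝ} (hx₀ : -1 ≤ x) (hx₁ : x ≤ 1) (n : ℕ) :
    (1 - x) ^ n * (1 + n * x) ≤ 1 :=
  calc (1 - x) ^ n * (1 + n * x)
      ≤ (1 - x) ^ n * (1 + x) ^ n :=
        mul_le_mul_of_nonneg_left (one_add_mul_le_pow (by linarith) n) (by bound)
    _ = (1 - x ^ 2) ^ n := by rw [← mul_pow]; ring
    _ ≤ 1 := pow_le_one₀ (by nlinarith) (by nlinarith)

lemma min_one_div_two_le_div_one_add {t : ℝ} (ht : 0 ≤ t) : min 1 t / 2 ≤ t / (1 + t) := by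
  rw [div_le_div_iff₀ two_pos (by linarith)]
  rcases le_total t 1 with h | h
  · rw [min_eq_right h]; nlinarith
  · rw [min_eq_left h]; linarith

lemma min_one_mul_div_two_le_one_sub_one_sub_pow {x : ℝ} (hx₀ : 0 ≤ x) (hx₁ : x ≤ 1) (n : ℕ) :
    min 1 (n * x) / 2 ≤ 1 - (1 - x) ^ n := by
  have hnx : 0 ≤ (n : ℝ) * x := by positivity
  have hpow : (1 - x) ^ n ≤ 1 / (1 + n * x) := by
    rw [le_div_iff₀ (by linarith)]
    exact one_sub_pow_mul_one_add_mul_le_one (by linarith) hx₁ n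
  calc min 1 (n * x) / 2 ≤ n * x / (1 + n * x) := min_one_div_two_le_div_one_add hnx
    _ = 1 - 1 / (1 + n * x) := by field_simp; ring
    _ ≤ 1 - (1 - x) ^ n := by linarith

namespace ENNReal

lemma half_mul_min_one_mul_le_one_sub_one_sub_pow {p : ℝ≥0∞} (hp : p ≤ 1) (n : ℕ) :
    1 / 2 * min 1 (n * p) ≤ 1 - (1 - p) ^ n := by
  obtain ⟨x, hx₀, rfl⟩ : ∃ x : ℝ, 0 ≤ x ∧ ENNReal.ofReal x = p :=
    ⟨p.toReal, toReal_nonneg, ofReal_toReal (ne_top_of_le_ne_top one_ne_top hp)⟩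
  have hx₁ : x ≤ 1 := by simpa using hp
  have hsub : 1 - ENNReal.ofReal x = ENNReal.ofReal (1 - x) := by
    rw [ofReal_sub _ hx₀, ofReal_one]
  have key := ofReal_le_ofReal (min_one_mul_div_two_le_one_sub_one_sub_pow hx₀ hx₁ n)
  rw [ofReal_sub _ (by bound), ofReal_div_of_pos two_pos, ofReal_min, ofReal_one,
    ofReal_mul (by positivity), ofReal_natCast, ofReal_pow (by linarith), ofReal_ofNat,
    ← hsub] at key
  rwa [one_div, mul_comm, ← div_eq_mul_inv]

end ENNReal

lemma ProbabilityTheory.iIndepSet.measure_iUnion_eq_one_sub_prod {Ω ι : Type*} [Fintype ι]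
    [MeasurableSpace Ω] {μ : Measure Ω} [IsProbabilityMeasure μ] {A : ι → Set Ω}
    (hmeas : ∀ i, MeasurableSet (A i)) (hindep : iIndepSet A μ) :
    μ (⋃ i, A i) = 1 - ∏ i, (1 - μ (A i)) := by
  have hinter : μ (⋂ i, (A i)ᶜ) = ∏ i, (1 - μ (A i)) := by
    rw [((iIndepSet_iff_iIndep A μ).1 hindep).meas_iInter fun i ↦
      (MeasurableSpace.measurableSet_generateFrom (Set.mem_singleton _)).compl]
    simp_rw [prob_compl_eq_one_sub (hmeas _)]
  rw [← hinter, ← Set.compl_iUnion, prob_compl_eq_one_sub (MeasurableSet.iUnion hmeas),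
    ENNReal.sub_sub_cancel ENNReal.one_ne_top prob_le_one]

theorem truncated_union_bound_lower_general
    {Ω : Type*} [MeasurableSpace Ω] (μ : Measure Ω) [IsProbabilityMeasure μ]
    (M : ℕ) (A : Fin M → Set Ω) (hmeas : ∀ i, MeasurableSet (A i))
    (hindep : iIndepSet A μ) (p : ℝ≥0∞) (hp : p ≤ 1) (hA : ∀ i, μ (A i) = p) :
    (1 / 2) * min 1 ((M : ℝ≥0∞) * p) ≤ μ (⋃ i, A i) := by
  rw [hindep.measure_iUnion_eq_one_sub_prod hmeas]
  simpa [hA] using ENNReal.half_mul_min_one_mul_le_one_sub_one_sub_pow hp M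

/-- Shulman's lemma: for `M` independent events each of probability `p`,
`Pr(⋃ᵢ Aᵢ) ≥ (1/2) min 1 (M p)`. -/
theorem truncated_union_bound_lower
    {Ω : Type*} [MeasurableSpace Ω] (μ : Measure Ω) [IsProbabilityMeasure μ]
    (M : ℕ) (hM : 0 < M) (A : Fin M → Set Ω) (hmeas : ∀ i, MeasurableSet (A i))
    (hindep : iIndepSet A μ) (p : ℝ≥0∞) (hp : p ≤ 1) (hA : ∀ i, μ (A i) = p) :
    (1 / 2) * min 1 ((M : ℝ≥0∞) * p) ≤ μ (⋃ i, A i) :=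
  truncated_union_bound_lower_general μ M A hmeas hindep p hp hA
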